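/- Let G(X) = 2(X¹²X³⁴ + X¹³X⁴² + X¹⁴X²³) be the Klein quadric form on Λ²ℂ⁴ and Q(X) = (a₁+a₂)(X¹²)² + (a₁+a₃)(X¹³)² + (a₁+a₄)(X¹⁴)² + (a₃+a₄)(X³⁴)² + (a₄+a₂)(X⁴²)² + (a₂+a₃)(X²³)² the Battaglini quadric of q₀ = diag(1,1,1,1) and q₁ = diag(a₁,a₂,a₃,a₄). Then the characteristic polynomial of the endomorphism G⁻¹Q is (t² − α)(t² − β)(t² − γ) where α = (a₁+a₂)(a₃+a₄), β = (a₁+a₃)(a₄+a₂), γ = (a₁+a₄)(a₂+a₃). In particular it is an even polynomial in t. -/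

import Mathlib

open Polynomial

/-- The matrix of the Klein quadric form `G(X) = 2(X¹²X³⁴ + X¹³X⁴² + X¹⁴X²³)` in
the basis `(X¹², X¹³, X¹⁴, X³⁴, X⁴², X²³)`. -/
noncomputable def G6 : Matrix (Fin 6) (Fin 6) ℂ :=
  !![0, 0, 0, 1, 0, 0;
     0, 0, 0, 0, 1, 0;
     0, 0, 0, 0, 0, 1;
     1, 0, 0, 0, 0, 0;
     0, 1, 0, 0, 0, 0;
     0, 0, 1, 0, 0, 0]

/-- The matrix of the Battaglini quadric of `q₀ = diag(1,1,1,1)` and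
`q₁ = diag(a₁,a₂,a₃,a₄)` in the basis `(X¹², X¹³, X¹⁴, X³⁴, X⁴², X²³)`. -/
noncomputable def Q6 (a : Fin 4 → ℂ) : Matrix (Fin 6) (Fin 6) ℂ :=
  Matrix.diagonal
    ![a 0 + a 1, a 0 + a 2, a 0 + a 3, a 2 + a 3, a 3 + a 1, a 1 + a 2]


/-!
`G` is an involution pairing each coordinate `X^{ij}` with its complementary coordinate
`X^{kl}`, and `Q` is diagonal, so `G⁻¹Q = GQ` preserves each of the three planes spanned by a
complementary pair and acts on it by `[[0, q_{kl}], [q_{ij}, 0]]`, whose characteristic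
polynomial is `t² − q_{ij} q_{kl}`.
-/

namespace Matrix

variable {R n o : Type*} [CommRing R] [Fintype n] [DecidableEq n] [Fintype o] [DecidableEq o]

theorem charmatrix_blockDiagonal (M : o → Matrix n n R) :
    charmatrix (blockDiagonal M) = blockDiagonal fun k => charmatrix (M k) := by
  ext ⟨i, k⟩ ⟨j, k'⟩
  by_cases hk : k = k' <;> by_cases hi : i = j <;> simp [blockDiagonal_apply, hk, hi]

theorem charpoly_blockDiagonal (M : o → Matrix n n R) :
    (blockDiagonal M).charpoly = ∏ k, (M k).charpoly := by
  rw [charpoly, charmatrix_blockDiagonal, det_blockDiagonal]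
  rfl

theorem charpoly_antidiagonal_fin_two [Nontrivial R] (b c : R) :
    !![0, b; c, 0].charpoly = X ^ 2 - C (b * c) := by
  simp [charpoly_fin_two, trace_fin_two, det_fin_two]
  ring

end Matrix

open Matrix

theorem G6_mul_self : G6 * G6 = 1 := by
  ext i j
  fin_cases i <;> fin_cases j <;> simp [G6, mul_apply, Fin.sum_univ_succ, one_apply]

theorem G6_inv : G6⁻¹ = G6 :=
  inv_eq_left_inv G6_mul_self

theorem G6_mul_diagonal (q : Fin 6 → ℂ) :
    G6 * diagonal q = reindex finProdFinEquiv finProdFinEquiv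
      (blockDiagonal fun k : Fin 3 => !![0, q (Fin.natAdd 3 k); q (Fin.castAdd 3 k), 0]) := by
  ext i j
  fin_cases i <;> fin_cases j <;>
    simp [G6, blockDiagonal_apply, finProdFinEquiv, Fin.modNat, Fin.divNat]

/-- The characteristic polynomial of the endomorphism `G⁻¹Q` is
`(t² − α)(t² − β)(t² − γ)` with `α = (a₁+a₂)(a₃+a₄)`, `β = (a₁+a₃)(a₄+a₂)`,
`γ = (a₁+a₄)(a₂+a₃)`; in particular it is an even polynomial in `t`. -/
theorem stmt15 (a : Fin 4 → ℂ) :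
    (G6⁻¹ * Q6 a).charpoly =
      (X ^ 2 - C ((a 0 + a 1) * (a 2 + a 3))) *
        (X ^ 2 - C ((a 0 + a 2) * (a 3 + a 1))) *
        (X ^ 2 - C ((a 0 + a 3) * (a 1 + a 2))) := by
  rw [G6_inv, Q6, G6_mul_diagonal, charpoly_reindex, charpoly_blockDiagonal,
    Fin.prod_univ_three]
  simp only [charpoly_antidiagonal_fin_two]
  simp [mul_comm]
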